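/- Any drawing of K_{1,4,n} contains n induced drawings of K_{1,4,n-1} (one for each suppressed vertex of the size-n part), and counting crossings over these yields: (n-1)·cr_φ(E_{XY}, ∪_i E(z_i)) + (n-2)·cr_φ(∪_i E(z_i)) ≥ n·cr(K_{1,4,n-1}). -/

import Mathlib

open Set

/-- The Zarankiewicz function `Z(m,n) = ⌊m/2⌋⌊(m-1)/2⌋⌊n/2⌋⌊(n-1)/2⌋`. -/
def Z (m n : ℕ) : ℕ := (m / 2) * ((m - 1) / 2) * (n / 2) * ((n - 1) / 2)

/-- A good drawing of a simple graph `G` in the plane: vertices are distinct points,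
each edge is a simple arc joining its endpoints, arcs avoid vertices in their interiors,
adjacent edges do not cross, two edges meet in at most one interior point, and no point
of the plane lies on (the interiors of) three distinct edges. -/
structure GoodDrawing {V : Type*} (G : SimpleGraph V) where
  vert : V → ℝ × ℝ
  vert_inj : Function.Injective vert
  arc : G.edgeSet → ℝ → ℝ × ℝ
  arc_cont : ∀ e, ContinuousOn (arc e) (Set.Icc 0 1)
  arc_inj : ∀ e, Set.InjOn (arc e) (Set.Icc 0 1)
  arc_ends : ∀ e : G.edgeSet, ∃ a b, (e : Sym2 V) = s(a, b) ∧
    arc e 0 = vert a ∧ arc e 1 = vert b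
  arc_avoids_vert : ∀ e, ∀ t ∈ Set.Ioo (0 : ℝ) 1, arc e t ∉ Set.range vert
  adj_no_cross : ∀ e e' : G.edgeSet, e ≠ e' → (∃ v, v ∈ (e : Sym2 V) ∧ v ∈ (e' : Sym2 V)) →
    ∀ s ∈ Set.Ioo (0 : ℝ) 1, ∀ t ∈ Set.Ioo (0 : ℝ) 1, arc e s ≠ arc e' t
  cross_at_most_one : ∀ e e' : G.edgeSet, e ≠ e' →
    Set.Subsingleton (arc e '' Set.Ioo 0 1 ∩ arc e' '' Set.Ioo 0 1)
  no_triple_point : ∀ p : ℝ × ℝ, ∀ e₁ e₂ e₃ : G.edgeSet,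
    p ∈ arc e₁ '' Set.Ioo 0 1 → p ∈ arc e₂ '' Set.Ioo 0 1 → p ∈ arc e₃ '' Set.Ioo 0 1 →
    e₁ = e₂ ∨ e₁ = e₃ ∨ e₂ = e₃

namespace GoodDrawing

variable {V : Type*} {G : SimpleGraph V} (D : GoodDrawing G)

/-- The set of crossing points between an edge of `A` and an edge of `B`. -/
def crossings (A B : Set G.edgeSet) : Set (ℝ × ℝ) :=
  {p | ∃ e ∈ A, ∃ e' ∈ B, e ≠ e' ∧ p ∈ D.arc e '' Set.Ioo 0 1 ∧ p ∈ D.arc e' '' Set.Ioo 0 1}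

/-- `cr_φ(A,B)`: the number of crossings between an edge of `A` and an edge of `B`. -/
noncomputable def crCount (A B : Set G.edgeSet) : ℕ := Nat.card (D.crossings A B)

/-- The total number of crossings of the drawing. -/
noncomputable def crossNum : ℕ := D.crCount Set.univ Set.univ

/-- The image (underlying point set) of the drawing. -/
def image : Set (ℝ × ℝ) := Set.range D.vert ∪ ⋃ e : G.edgeSet, D.arc e '' Set.Icc 0 1

/-- A region of the drawing: a connected component of the complement of its image. -/
def IsRegion (C : Set (ℝ × ℝ)) : Prop :=
  ∃ p ∉ D.image, C = connectedComponentIn (D.image)ᶜ p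

end GoodDrawing

/-- The crossing number of a graph: the least number of crossings in a good drawing. -/
noncomputable def crossingNumber {V : Type*} (G : SimpleGraph V) : ℕ :=
  sInf {n | ∃ D : GoodDrawing G, D.crossNum = n}

/-- Isomorphism of drawings: a homeomorphism of the plane carrying one drawing to the
other, respecting the graph structure via some graph automorphism. -/
def DrawingIso {V : Type*} {G : SimpleGraph V} (D D' : GoodDrawing G) : Prop :=
  ∃ (h : ℝ × ℝ ≃ₜ ℝ × ℝ) (σ : G ≃g G),
    (∀ v, h (D.vert v) = D'.vert (σ v)) ∧
    (∀ e : G.edgeSet, h '' (D.arc e '' Set.Icc 0 1) = D'.arc (σ.mapEdgeSet e) '' Set.Icc 0 1)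

/-!
Deleting `z i` leaves a drawing of `K_{1,4,n-1}`, whose crossings are the crossings of the
drawing in which neither edge meets `z i`; so the `n` deletions carry at least
`n · cr(K_{1,4,n-1})` crossings in total. Because no three edges pass through a point, each
crossing is a crossing of one well-defined pair of edges, and it survives exactly the deletions
of the `z i` that lie on neither edge. Edges of `E_{XY}` all meet `x₁`, so they never cross each
other; a crossing of an `E_{XY}`-edge with an edge at `z_l` survives `n - 1` deletions, and a
crossing of edges at `z_j` and `z_l` (necessarily `j ≠ l`, as adjacent edges do not cross)
survives `n - 2` of them.
-/

open SimpleGraph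

universe u

open Finset in
theorem Finset.sum_ncard_eq_sum_ncard_setOf_mem {ι α : Type*} [Fintype ι] {S : ι → Set α}
    {T : Finset α} (hS : ∀ i, S i ⊆ T) :
    ∑ i, (S i).ncard = ∑ p ∈ T, {i | p ∈ S i}.ncard := by
  classical
  calc ∑ i, (S i).ncard = ∑ i, #(T.bipartiteAbove (fun i p => p ∈ S i) i) := by
        refine sum_congr rfl fun i _ => ?_
        rw [← Set.ncard_coe_finset, coe_bipartiteAbove]
        exact congrArg Set.ncard (Set.sep_eq_of_subset (hS i)).symm
    _ = ∑ p ∈ T, #(univ.bipartiteBelow (fun i p => p ∈ S i) p) :=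
        sum_card_bipartiteAbove_eq_sum_card_bipartiteBelow _
    _ = ∑ p ∈ T, {i | p ∈ S i}.ncard := by
        refine sum_congr rfl fun p _ => ?_
        rw [← Set.ncard_coe_finset, coe_bipartiteBelow]
        simp

theorem Set.sum_ncard_eq_of_subset_union {ι α : Type*} [Fintype ι] {S : ι → Set α}
    {T₁ T₂ : Set α} (h₁ : T₁.Finite) (h₂ : T₂.Finite) (hdisj : Disjoint T₁ T₂)
    (hS : ∀ i, S i ⊆ T₁ ∪ T₂) {a b : ℕ} (ha : ∀ p ∈ T₁, {i | p ∈ S i}.ncard = a)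
    (hb : ∀ p ∈ T₂, {i | p ∈ S i}.ncard = b) :
    ∑ i, (S i).ncard = a * T₁.ncard + b * T₂.ncard := by
  classical
  have hT : ∀ i, S i ⊆ ↑(h₁.toFinset ∪ h₂.toFinset) := by simpa using hS
  rw [Finset.sum_ncard_eq_sum_ncard_setOf_mem hT, Finset.sum_union (by simpa using hdisj),
    Finset.sum_congr rfl fun p hp => ha p (h₁.mem_toFinset.1 hp),
    Finset.sum_congr rfl fun p hp => hb p (h₂.mem_toFinset.1 hp),
    Finset.sum_const, Finset.sum_const, smul_eq_mul, smul_eq_mul,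
    ncard_eq_toFinset_card _ h₁, ncard_eq_toFinset_card _ h₂, mul_comm a, mul_comm b]

theorem Fin.exists_embedding_range_eq_compl {n : ℕ} (i : Fin n) :
    ∃ g : Fin (n - 1) ↪ Fin n, range g = {i}ᶜ := by
  have hcard : Fintype.card ({i}ᶜ : Set (Fin n)) = n - 1 := by
    rw [Fintype.card_compl_set]
    simp
  refine ⟨(Fintype.equivFinOfCardEq hcard).symm.toEmbedding.trans (Function.Embedding.subtype _),
    ?_⟩
  change range (Subtype.val ∘ (Fintype.equivFinOfCardEq hcard).symm) = _
  rw [Set.range_comp, Equiv.range_eq_univ, Set.image_univ, Subtype.range_coe]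

theorem SimpleGraph.IsIndepSet.eq_of_apply_mem_edge {V ι : Type*} {G : SimpleGraph V}
    {z : ι → V} (hZ : G.IsIndepSet (range z)) (hz : Function.Injective z) {e : Sym2 V}
    (he : e ∈ G.edgeSet) {i j : ι} (hi : z i ∈ e) (hj : z j ∈ e) : i = j := by
  by_contra hij
  rw [(Sym2.mem_and_mem_iff (hz.ne hij)).1 ⟨hi, hj⟩] at he
  exact hZ ⟨i, rfl⟩ ⟨j, rfl⟩ (hz.ne hij) he

theorem SimpleGraph.Embedding.range_mapEdgeSet {V V' : Type*} {G : SimpleGraph V}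
    {G' : SimpleGraph V'} (f : G' ↪g G) :
    range f.mapEdgeSet = {e : G.edgeSet | ∀ v ∈ (e : Sym2 V), v ∈ range f} := by
  refine Set.ext fun ⟨e, he⟩ => ?_
  induction e using Sym2.ind with
  | h a b =>
    constructor
    · rintro ⟨e', hee'⟩ v hv
      rw [← congrArg Subtype.val hee'] at hv
      obtain ⟨w, -, rfl⟩ := Sym2.mem_map.1 hv
      exact ⟨w, rfl⟩
    · intro hab
      obtain ⟨a', rfl⟩ := hab a (Sym2.mem_mk_left a b)
      obtain ⟨b', rfl⟩ := hab _ (Sym2.mem_mk_right _ b)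
      exact ⟨⟨s(a', b'), f.map_adj_iff.1 he⟩, rfl⟩

def SimpleGraph.Embedding.completeMultipartiteGraph {ι : Type*} {V W : ι → Type*}
    (f : ∀ i, V i ↪ W i) : completeMultipartiteGraph V ↪g completeMultipartiteGraph W where
  toEmbedding := Function.Embedding.sigmaMap (Function.Embedding.refl ι) f
  map_rel_iff' := Iff.rfl

theorem SimpleGraph.Embedding.range_completeMultipartiteGraph {ι : Type*} {V W : ι → Type*}
    (f : ∀ i, V i ↪ W i) :
    range (Embedding.completeMultipartiteGraph f) = {v | v.2 ∈ range (f v.1)} := by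
  ext ⟨i, b⟩
  constructor
  · rintro ⟨⟨j, a⟩, h⟩
    cases h
    exact ⟨a, rfl⟩
  · rintro ⟨a, ha⟩
    exact ⟨⟨i, a⟩, congrArg (Sigma.mk i) ha⟩

def thirdPartEmbedding {X Y Z' Z : Type u} (g : Z' ↪ Z) : ∀ j, ![X, Y, Z'] j ↪ ![X, Y, Z] j
  | 0 => Function.Embedding.refl X
  | 1 => Function.Embedding.refl Y
  | 2 => g

theorem completeMultipartiteGraph.exists_embedding_range_eq_compl {X Y : Type} {n : ℕ}
    (i : Fin n) :
    ∃ f : completeMultipartiteGraph ![X, Y, Fin (n - 1)] ↪g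
        completeMultipartiteGraph ![X, Y, Fin n],
      range f = {⟨2, i⟩}ᶜ := by
  obtain ⟨g, hg⟩ := Fin.exists_embedding_range_eq_compl i
  refine ⟨Embedding.completeMultipartiteGraph (thirdPartEmbedding g), ?_⟩
  rw [Embedding.range_completeMultipartiteGraph]
  ext ⟨j, a⟩
  match j, a with
  | 0, a => simpa [thirdPartEmbedding, Sigma.ext_iff] using ⟨a, rfl⟩
  | 1, a => simpa [thirdPartEmbedding, Sigma.ext_iff] using ⟨a, rfl⟩
  | 2, (a : Fin n) =>
    change a ∈ range g ↔ _
    simp [hg, Sigma.ext_iff]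

theorem completeMultipartiteGraph.mem_of_forall_not_mem {X Y Z : Type u} [Subsingleton X] (x : X)
    (e : (completeMultipartiteGraph ![X, Y, Z]).edgeSet)
    (he : ∀ c : Z, (⟨2, c⟩ : Σ j, ![X, Y, Z] j) ∉ (e : Sym2 (Σ j, ![X, Y, Z] j))) :
    (⟨0, x⟩ : Σ j, ![X, Y, Z] j) ∈ (e : Sym2 (Σ j, ![X, Y, Z] j)) := by
  obtain ⟨e, hadj⟩ := e
  induction e using Sym2.ind with
  | h a b =>
    obtain ⟨j, a⟩ := a
    obtain ⟨k, b⟩ := b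
    match j, a, k, b with
    | 0, a, _, _ => exact Subsingleton.elim (α := X) a x ▸ Sym2.mem_mk_left _ _
    | 2, a, _, _ => exact absurd (Sym2.mem_mk_left _ _) (he a)
    | 1, _, 0, b => exact Subsingleton.elim (α := X) b x ▸ Sym2.mem_mk_right _ _
    | 1, _, 1, _ => exact absurd rfl hadj
    | 1, _, 2, b => exact absurd (Sym2.mem_mk_right _ _) (he b)

namespace GoodDrawing

section Basic

variable {V V' : Type*} {G : SimpleGraph V} {G' : SimpleGraph V'} (D : GoodDrawing G)

theorem disjoint_arcs_of_mem_of_mem {e e' : G.edgeSet} (hne : e ≠ e') {v : V}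
    (hv : v ∈ (e : Sym2 V)) (hv' : v ∈ (e' : Sym2 V)) :
    Disjoint (D.arc e '' Ioo 0 1) (D.arc e' '' Ioo 0 1) := by
  rw [Set.disjoint_left]
  rintro _ ⟨s, hs, rfl⟩ ⟨t, ht, hst⟩
  exact D.adj_no_cross e e' hne ⟨v, hv, hv'⟩ s hs t ht hst.symm

theorem crossings_eq_empty_of_mem {A B : Set G.edgeSet} {v : V}
    (hA : ∀ e ∈ A, v ∈ (e : Sym2 V)) (hB : ∀ e ∈ B, v ∈ (e : Sym2 V)) :
    D.crossings A B = ∅ := by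
  refine Set.eq_empty_of_forall_notMem ?_
  rintro p ⟨e, he, e', he', hne, hp, hp'⟩
  exact Set.disjoint_left.1 (D.disjoint_arcs_of_mem_of_mem hne (hA e he) (hB e' he')) hp hp'

theorem mem_crossings_iff {p : ℝ × ℝ} {e e' : G.edgeSet} (hne : e ≠ e')
    (hp : p ∈ D.arc e '' Ioo 0 1) (hp' : p ∈ D.arc e' '' Ioo 0 1) {A B : Set G.edgeSet} :
    p ∈ D.crossings A B ↔ e ∈ A ∧ e' ∈ B ∨ e' ∈ A ∧ e ∈ B := by
  constructor
  · rintro ⟨c, hc, c', hc', hcc', hq, hq'⟩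
    rcases D.no_triple_point p c c' e hq hq' hp with h | rfl | rfl <;>
    rcases D.no_triple_point p c c' e' hq hq' hp' with h' | rfl | rfl <;> tauto
  · rintro (⟨he, he'⟩ | ⟨he', he⟩)
    · exact ⟨e, he, e', he', hne, hp, hp'⟩
    · exact ⟨e', he', e, he, hne.symm, hp', hp⟩

theorem crossings_finite [Finite G.edgeSet] (A B : Set G.edgeSet) :
    (D.crossings A B).Finite := by
  refine Set.Finite.subset
    (Set.finite_iUnion fun e : {ee : G.edgeSet × G.edgeSet // ee.1 ≠ ee.2} =>
      (D.cross_at_most_one _ _ e.2).finite) ?_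
  rintro p ⟨e, -, e', -, hne, hp, hp'⟩
  exact Set.mem_iUnion.2 ⟨⟨(e, e'), hne⟩, hp, hp'⟩

def comap (f : G' ↪g G) : GoodDrawing G' where
  vert := D.vert ∘ f
  vert_inj := D.vert_inj.comp f.injective
  arc e := D.arc (f.mapEdgeSet e)
  arc_cont _ := D.arc_cont _
  arc_inj _ := D.arc_inj _
  arc_ends := by
    rintro ⟨e, he⟩
    induction e using Sym2.ind with
    | h a' b' =>
      obtain ⟨a, b, hab, h0, h1⟩ := D.arc_ends (f.mapEdgeSet ⟨s(a', b'), he⟩)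
      change s(f a', f b') = s(a, b) at hab
      rcases Sym2.eq_iff.1 hab with ⟨rfl, rfl⟩ | ⟨rfl, rfl⟩
      · exact ⟨a', b', rfl, h0, h1⟩
      · exact ⟨b', a', Sym2.eq_swap, h0, h1⟩
  arc_avoids_vert e t ht := fun ⟨v, hv⟩ => D.arc_avoids_vert _ t ht ⟨f v, hv⟩
  adj_no_cross e e' hne := fun ⟨v, hv, hv'⟩ =>
    D.adj_no_cross _ _ (f.mapEdgeSet.injective.ne hne)
      ⟨f v, Sym2.mem_map.2 ⟨v, hv, rfl⟩, Sym2.mem_map.2 ⟨v, hv', rfl⟩⟩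
  cross_at_most_one e e' hne := D.cross_at_most_one _ _ (f.mapEdgeSet.injective.ne hne)
  no_triple_point p e₁ e₂ e₃ h₁ h₂ h₃ := by
    simpa only [f.mapEdgeSet.injective.eq_iff] using D.no_triple_point p _ _ _ h₁ h₂ h₃

theorem crossNum_comap (f : G' ↪g G) :
    (D.comap f).crossNum = D.crCount (range f.mapEdgeSet) (range f.mapEdgeSet) := by
  refine congrArg Nat.card (congrArg Set.Elem (Set.ext fun p => ⟨?_, ?_⟩))
  · rintro ⟨e, -, e', -, hne, hp, hp'⟩
    exact ⟨_, ⟨e, rfl⟩, _, ⟨e', rfl⟩, f.mapEdgeSet.injective.ne hne, hp, hp'⟩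
  · rintro ⟨_, ⟨e, rfl⟩, _, ⟨e', rfl⟩, hne, hp, hp'⟩
    exact ⟨e, trivial, e', trivial, ne_of_apply_ne _ hne, hp, hp'⟩

theorem crossingNumber_le_crCount_avoiding (f : G' ↪g G) {v : V} (hf : range f = {v}ᶜ) :
    crossingNumber G' ≤ D.crCount {e | v ∉ (e : Sym2 V)} {e | v ∉ (e : Sym2 V)} := by
  have hrange : range f.mapEdgeSet = {e : G.edgeSet | v ∉ (e : Sym2 V)} := by
    rw [f.range_mapEdgeSet, hf]
    exact Set.ext fun e => ⟨fun h hv => h v hv rfl, fun h w hw hwv => h (hwv ▸ hw)⟩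
  exact hrange ▸ D.crossNum_comap f ▸ Nat.sInf_le ⟨D.comap f, rfl⟩

end Basic

section Deletion

variable {V : Type*} {G : SimpleGraph V} (D : GoodDrawing G) {ι : Type*} {z : ι → V}

theorem ncard_setOf_mem_crossings_avoiding_eq_card_sub_one [Fintype ι]
    (hz : Function.Injective z) (hZ : G.IsIndepSet (range z)) {p : ℝ × ℝ}
    (hp : p ∈ D.crossings {e | ∀ i, z i ∉ (e : Sym2 V)} (⋃ i, {e | z i ∈ (e : Sym2 V)})) :
    {i | p ∈ D.crossings {e | z i ∉ (e : Sym2 V)} {e | z i ∉ (e : Sym2 V)}}.ncard =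
      Fintype.card ι - 1 := by
  obtain ⟨e, he, e', he', hne, hpe, hpe'⟩ := hp
  obtain ⟨j, hj⟩ := Set.mem_iUnion.1 he'
  have hsurvive :
      {i | p ∈ D.crossings {e | z i ∉ (e : Sym2 V)} {e | z i ∉ (e : Sym2 V)}} = {j}ᶜ := by
    ext i
    simp only [D.mem_crossings_iff hne hpe hpe', Set.mem_ofPred_eq, Set.mem_compl_singleton_iff,
      he i, not_false_eq_true, true_and, and_true, or_self]
    exact ⟨fun h hij => h (hij ▸ hj),
      fun hij hi => hij (hZ.eq_of_apply_mem_edge hz e'.2 hi hj)⟩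
  rw [hsurvive, Set.ncard_compl, Set.ncard_singleton, Nat.card_eq_fintype_card]

theorem ncard_setOf_mem_crossings_avoiding_eq_card_sub_two [Fintype ι]
    (hz : Function.Injective z) (hZ : G.IsIndepSet (range z)) {p : ℝ × ℝ}
    (hp : p ∈ D.crossings (⋃ i, {e | z i ∈ (e : Sym2 V)})
      (⋃ i, {e | z i ∈ (e : Sym2 V)})) :
    {i | p ∈ D.crossings {e | z i ∉ (e : Sym2 V)} {e | z i ∉ (e : Sym2 V)}}.ncard =
      Fintype.card ι - 2 := by
  obtain ⟨e, he, e', he', hne, hpe, hpe'⟩ := hp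
  obtain ⟨j, hj⟩ := Set.mem_iUnion.1 he
  obtain ⟨l, hl⟩ := Set.mem_iUnion.1 he'
  have hjl : j ≠ l := by
    rintro rfl
    exact Set.disjoint_left.1 (D.disjoint_arcs_of_mem_of_mem hne hj hl) hpe hpe'
  have hsurvive :
      {i | p ∈ D.crossings {e | z i ∉ (e : Sym2 V)} {e | z i ∉ (e : Sym2 V)}} =
        {j, l}ᶜ := by
    ext i
    simp only [D.mem_crossings_iff hne hpe hpe', Set.mem_ofPred_eq, Set.mem_compl_iff,
      Set.mem_insert_iff, Set.mem_singleton_iff, and_comm (a := z i ∉ (e' : Sym2 V)), or_self]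
    exact ⟨fun ⟨hi, hi'⟩ =>
        not_or.2 ⟨fun hij => hi (hij ▸ hj), fun hil => hi' (hil ▸ hl)⟩,
      fun h => ⟨fun hi => h (Or.inl (hZ.eq_of_apply_mem_edge hz e.2 hi hj)),
        fun hi => h (Or.inr (hZ.eq_of_apply_mem_edge hz e'.2 hi hl))⟩⟩
  rw [hsurvive, Set.ncard_compl, Set.ncard_pair hjl, Nat.card_eq_fintype_card]

theorem disjoint_crossings_avoidingAll_meeting :
    Disjoint (D.crossings {e | ∀ i, z i ∉ (e : Sym2 V)} (⋃ i, {e | z i ∈ (e : Sym2 V)}))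
      (D.crossings (⋃ i, {e | z i ∈ (e : Sym2 V)}) (⋃ i, {e | z i ∈ (e : Sym2 V)})) := by
  rw [Set.disjoint_left]
  rintro p ⟨e, he, e', -, hne, hpe, hpe'⟩ hp
  have he_meet : e ∈ ⋃ i, {c : G.edgeSet | z i ∈ (c : Sym2 V)} := by
    rcases (D.mem_crossings_iff hne hpe hpe').1 hp with ⟨h, -⟩ | ⟨-, h⟩ <;> exact h
  obtain ⟨i, hi⟩ := Set.mem_iUnion.1 he_meet
  exact he i hi

theorem crossings_avoiding_subset_union
    (hW : D.crossings {e | ∀ i, z i ∉ (e : Sym2 V)} {e | ∀ i, z i ∉ (e : Sym2 V)} = ∅)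
    (i : ι) :
    D.crossings {e | z i ∉ (e : Sym2 V)} {e | z i ∉ (e : Sym2 V)} ⊆
      D.crossings {e | ∀ i, z i ∉ (e : Sym2 V)} (⋃ i, {e | z i ∈ (e : Sym2 V)}) ∪
        D.crossings (⋃ i, {e | z i ∈ (e : Sym2 V)}) (⋃ i, {e | z i ∈ (e : Sym2 V)}) := by
  rintro p ⟨e, -, e', -, hne, hpe, hpe'⟩
  have hp := D.mem_crossings_iff hne hpe hpe' (A := {e | ∀ i, z i ∉ (e : Sym2 V)})
    (B := {e | ∀ i, z i ∉ (e : Sym2 V)})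
  rw [hW] at hp
  rw [Set.mem_union, D.mem_crossings_iff hne hpe hpe', D.mem_crossings_iff hne hpe hpe']
  simp only [Set.mem_iUnion, Set.mem_ofPred_eq, ← not_exists] at hp ⊢
  tauto

theorem sum_crCount_avoiding [Fintype ι] [Finite G.edgeSet] (hz : Function.Injective z)
    (hZ : G.IsIndepSet (range z))
    (hW : D.crossings {e | ∀ i, z i ∉ (e : Sym2 V)} {e | ∀ i, z i ∉ (e : Sym2 V)} = ∅) :
    ∑ i, D.crCount {e | z i ∉ (e : Sym2 V)} {e | z i ∉ (e : Sym2 V)} =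
      (Fintype.card ι - 1) *
          D.crCount {e | ∀ i, z i ∉ (e : Sym2 V)} (⋃ i, {e | z i ∈ (e : Sym2 V)}) +
        (Fintype.card ι - 2) *
          D.crCount (⋃ i, {e | z i ∈ (e : Sym2 V)}) (⋃ i, {e | z i ∈ (e : Sym2 V)}) :=
  Set.sum_ncard_eq_of_subset_union (D.crossings_finite _ _) (D.crossings_finite _ _)
    D.disjoint_crossings_avoidingAll_meeting (D.crossings_avoiding_subset_union hW)
    (fun _ => D.ncard_setOf_mem_crossings_avoiding_eq_card_sub_one hz hZ)
    (fun _ => D.ncard_setOf_mem_crossings_avoiding_eq_card_sub_two hz hZ)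

end Deletion

end GoodDrawing

theorem K14n_counting_general (n : ℕ)
    (D : GoodDrawing (SimpleGraph.completeMultipartiteGraph ![Fin 1, Fin 4, Fin n]))
    (E : (Σ i : Fin 3, ![Fin 1, Fin 4, Fin n] i) →
      Set (SimpleGraph.completeMultipartiteGraph ![Fin 1, Fin 4, Fin n]).edgeSet)
    (hE : ∀ v, E v = {e | v ∈ (e : Sym2 (Σ i : Fin 3, ![Fin 1, Fin 4, Fin n] i))})
    (EXY : Set (SimpleGraph.completeMultipartiteGraph ![Fin 1, Fin 4, Fin n]).edgeSet)
    (hEXY : EXY =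
      {e | ∀ v ∈ (e : Sym2 (Σ i : Fin 3, ![Fin 1, Fin 4, Fin n] i)), Sigma.fst v ≠ 2})
    (z : Fin n → Σ i : Fin 3, ![Fin 1, Fin 4, Fin n] i) (hz : ∀ i, z i = ⟨2, i⟩) :
    (n - 1) * D.crCount EXY (⋃ i, E (z i)) +
      (n - 2) * D.crCount (⋃ i, E (z i)) (⋃ i, E (z i)) ≥
    n * crossingNumber
      (SimpleGraph.completeMultipartiteGraph ![Fin 1, Fin 4, Fin (n - 1)]) := by
  -- `hE` and `hEXY` equate images of edge sets under the coercion to `Sym2`.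
  obtain rfl : E = fun v => {e : (completeMultipartiteGraph ![Fin 1, Fin 4, Fin n]).edgeSet |
      v ∈ (e : Sym2 (Σ j : Fin 3, ![Fin 1, Fin 4, Fin n] j))} :=
    funext fun v => Set.ext fun e => by rw [← Subtype.val_injective.mem_set_image, hE]; rfl
  obtain rfl : z = fun i => ⟨2, i⟩ := funext hz
  obtain rfl : EXY = {e : (completeMultipartiteGraph ![Fin 1, Fin 4, Fin n]).edgeSet |
      ∀ i : Fin n, ⟨2, i⟩ ∉ (e : Sym2 (Σ j : Fin 3, ![Fin 1, Fin 4, Fin n] j))} := by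
    ext e
    rw [← Subtype.val_injective.mem_set_image, hEXY]
    exact ⟨fun h i hi => h _ hi rfl, fun h ⟨_, c⟩ hc hj => by subst hj; exact h c hc⟩
  have : ∀ j, Finite (![Fin 1, Fin 4, Fin n] j) := fun j => by
    fin_cases j <;> exact inferInstanceAs (Finite (Fin _))
  have hW := D.crossings_eq_empty_of_mem (completeMultipartiteGraph.mem_of_forall_not_mem 0 · ·)
    (completeMultipartiteGraph.mem_of_forall_not_mem 0 · ·)
  have hindep : (completeMultipartiteGraph ![Fin 1, Fin 4, Fin n]).IsIndepSet
      (range fun i : Fin n => (⟨2, i⟩ : Σ j : Fin 3, ![Fin 1, Fin 4, Fin n] j)) := by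
    rintro _ ⟨i, rfl⟩ _ ⟨j, rfl⟩ - hadj
    exact hadj rfl
  have hsum := D.sum_crCount_avoiding
    (z := fun i : Fin n => (⟨2, i⟩ : Σ j : Fin 3, ![Fin 1, Fin 4, Fin n] j))
    (fun _ _ h => eq_of_heq (Sigma.mk.inj h).2) hindep hW
  rw [Fintype.card_fin] at hsum
  calc n * crossingNumber (completeMultipartiteGraph ![Fin 1, Fin 4, Fin (n - 1)])
      = ∑ _i : Fin n, crossingNumber (completeMultipartiteGraph ![Fin 1, Fin 4, Fin (n - 1)]) :=
        by simp
    _ ≤ _ := Finset.sum_le_sum fun i _ =>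
        have ⟨f, hf⟩ := completeMultipartiteGraph.exists_embedding_range_eq_compl i
        D.crossingNumber_le_crCount_avoiding f hf
    _ = _ := hsum

/-- The counting inequality for drawings of `K_{1,4,n}`: deleting each vertex of the
size-`n` part in turn gives `n` drawings of `K_{1,4,n-1}`, whence
`(n-1)·cr_φ(E_{XY}, ∪ᵢ E(zᵢ)) + (n-2)·cr_φ(∪ᵢ E(zᵢ)) ≥ n·cr(K_{1,4,n-1})`. -/
theorem K14n_counting (n : ℕ) (hn : 1 ≤ n)
    (D : GoodDrawing (SimpleGraph.completeMultipartiteGraph ![Fin 1, Fin 4, Fin n]))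
    (E : (Σ i : Fin 3, ![Fin 1, Fin 4, Fin n] i) →
      Set (SimpleGraph.completeMultipartiteGraph ![Fin 1, Fin 4, Fin n]).edgeSet)
    (hE : ∀ v, E v = {e | v ∈ (e : Sym2 (Σ i : Fin 3, ![Fin 1, Fin 4, Fin n] i))})
    (EXY : Set (SimpleGraph.completeMultipartiteGraph ![Fin 1, Fin 4, Fin n]).edgeSet)
    (hEXY : EXY =
      {e | ∀ v ∈ (e : Sym2 (Σ i : Fin 3, ![Fin 1, Fin 4, Fin n] i)), Sigma.fst v ≠ 2})
    (z : Fin n → Σ i : Fin 3, ![Fin 1, Fin 4, Fin n] i) (hz : ∀ i, z i = ⟨2, i⟩) :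
    (n - 1) * D.crCount EXY (⋃ i, E (z i)) +
      (n - 2) * D.crCount (⋃ i, E (z i)) (⋃ i, E (z i)) ≥
    n * crossingNumber
      (SimpleGraph.completeMultipartiteGraph ![Fin 1, Fin 4, Fin (n - 1)]) :=
  K14n_counting_general n D E hE EXY hEXY z hz
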